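/- For a nonempty closed set C ⊆ ℝⁿ with C ≠ ℝⁿ, the set of boundary points x ∈ ∂C at which the proximal normal cone N_C^P(x) contains a nonzero vector is dense in ∂C. -/

import Mathlib

open scoped RealInnerProductSpace Topology
open Metric Filter

/-- The proximal normal cone to a set `C ⊆ ℝⁿ` at a point `x`. -/
def proxNormalCone {n : ℕ} (C : Set (EuclideanSpace ℝ (Fin n)))
    (x : EuclideanSpace ℝ (Fin n)) : Set (EuclideanSpace ℝ (Fin n)) :=
  {p | ∃ σ : ℝ, 0 ≤ σ ∧ ∀ y ∈ C, ⟪p, y - x⟫ ≤ σ * ‖y - x‖ ^ 2}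

/-!
If `u ∉ C` and `z` is a nearest point of `C` to `u`, then `u - z ≠ 0` is a proximal normal at `z`
(expand `‖u - z‖² ≤ ‖u - y‖²`), and `z` lies on `∂C` since the open segment `(z, u)` is closer to
`u` than `z`, hence misses `C`. Given `x ∈ ∂C`, pick `u ∉ C` within `ε / 2` of `x`; its nearest
point `z` is within `2 dist u x < ε` of `x`.
-/

section NearestPoint

variable {E : Type*} [NormedAddCommGroup E] [NormedSpace ℝ E] {C : Set E} {u z : E}

theorem lineMap_notMem_of_infDist_eq_dist (hu : infDist u C = dist u z) (huz : u ≠ z)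
    {t : ℝ} (ht : t ∈ Set.Ioo (0 : ℝ) 1) : AffineMap.lineMap z u t ∉ C := by
  intro hmem
  have hclose : dist (AffineMap.lineMap z u t) u = (1 - t) * dist u z := by
    rw [dist_lineMap_right, Real.norm_eq_abs, abs_of_pos (by linarith [ht.2]), dist_comm]
  have hfar : dist u z ≤ dist (AffineMap.lineMap z u t) u := by
    rw [← hu, dist_comm]
    exact infDist_le_dist_of_mem hmem
  have : 0 < dist u z := dist_pos.mpr huz
  nlinarith [ht.1]

theorem mem_frontier_of_infDist_eq_dist (hz : z ∈ C) (hu : u ∉ C)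
    (hdist : infDist u C = dist u z) : z ∈ frontier C := by
  have huz : u ≠ z := fun h => hu (h ▸ hz)
  rw [frontier_eq_closure_inter_closure]
  refine ⟨subset_closure hz, mem_closure_of_tendsto (f := AffineMap.lineMap (k := ℝ) z u)
    (b := 𝓝[>] 0) ?_ ?_⟩
  · exact (AffineMap.lineMap_continuous.tendsto' 0 z (by simp)).mono_left nhdsWithin_le_nhds
  · filter_upwards [Ioo_mem_nhdsGT (zero_lt_one' ℝ)] with t ht
    exact lineMap_notMem_of_infDist_eq_dist hdist huz ht

end NearestPoint

theorem sub_mem_proxNormalCone_of_infDist_eq_dist {n : ℕ} {C : Set (EuclideanSpace ℝ (Fin n))}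
    {u z : EuclideanSpace ℝ (Fin n)} (hdist : infDist u C = dist u z) :
    u - z ∈ proxNormalCone C z := by
  refine ⟨1 / 2, by norm_num, fun y hy => ?_⟩
  have hle : ‖u - z‖ ≤ ‖u - y‖ := by
    rw [← dist_eq_norm, ← dist_eq_norm, ← hdist]
    exact infDist_le_dist_of_mem hy
  have hexpand : ‖u - y‖ ^ 2 = ‖u - z‖ ^ 2 - 2 * ⟪u - z, y - z⟫ + ‖y - z‖ ^ 2 := by
    rw [show u - y = (u - z) - (y - z) by abel, norm_sub_sq_real]
  nlinarith [pow_le_pow_left₀ (norm_nonneg _) hle 2]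

theorem dense_nonzero_proxNormal_general {n : ℕ} (C : Set (EuclideanSpace ℝ (Fin n)))
    (hC : IsClosed C) :
    ∀ x ∈ frontier C, ∀ ε > 0, ∃ z ∈ frontier C,
      ‖z - x‖ < ε ∧ ∃ p ∈ proxNormalCone C z, p ≠ 0 := by
  intro x hx ε hε
  have hxC : x ∈ C := hC.frontier_subset hx
  obtain ⟨u, hu, hux⟩ : ∃ u ∈ Cᶜ, dist x u < ε / 2 :=
    mem_closure_iff.mp (frontier_subset_closure (frontier_compl C ▸ hx)) (ε / 2) (half_pos hε)
  obtain ⟨z, hz, hdist⟩ := hC.exists_infDist_eq_dist ⟨x, hxC⟩ u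
  have huz : dist u z ≤ dist u x := hdist ▸ infDist_le_dist_of_mem hxC
  rw [dist_comm] at hux
  refine ⟨z, mem_frontier_of_infDist_eq_dist hz hu hdist, ?_,
    u - z, sub_mem_proxNormalCone_of_infDist_eq_dist hdist, sub_ne_zero.mpr fun h => hu (h ▸ hz)⟩
  calc ‖z - x‖ = dist z x := (dist_eq_norm z x).symm
    _ ≤ dist u z + dist u x := by rw [dist_comm u z]; exact dist_triangle z u x
    _ < ε := by linarith

/-- Density in `∂C` of boundary points admitting a nonzero proximal normal. -/
theorem dense_nonzero_proxNormal {n : ℕ} (C : Set (EuclideanSpace ℝ (Fin n)))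
    (hC : IsClosed C) (hne : C.Nonempty) (hproper : C ≠ Set.univ) :
    ∀ x ∈ frontier C, ∀ ε > 0, ∃ z ∈ frontier C,
      ‖z - x‖ < ε ∧ ∃ p ∈ proxNormalCone C z, p ≠ 0 :=
  dense_nonzero_proxNormal_general C hC
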